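/- Let α > 2 and c > 0 be real numbers and define f(s) = (c s)^{2/α} γ(1 − 2/α, c s) for s > 0. Then f is twice differentiable on (0, ∞), and its second derivative f″(s) tends to −α c²/(α − 1) as s → 0⁺. (This is equation (VG2) in Appendix E, used to compute the variance of the received power from the Laplace transform.) -/

import Mathlib

/-!
With `a = 2 / α < 1` we have `f c α s = g (c * s)` for `g x = x ^ a * γ(1 - a, x)`, so
`f'' s = c ^ 2 * g'' (c * s)`. Since `∂ₓ γ(1 - a, x) = x ^ (-a) * exp (-x)`,
`g'' x = N x / x ^ (2 - a)` with
`N x = a (a - 1) γ(1 - a, x) + (a x ^ (1 - a) - x ^ (2 - a)) exp (-x)`.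
Both `N` and `x ^ (2 - a)` vanish at `0`, and their derivatives `(x - 2) x ^ (1 - a) exp (-x)`
and `(2 - a) x ^ (1 - a)` have ratio `(x - 2) exp (-x) / (2 - a)`, so by L'Hôpital
`g'' x → -2 / (2 - a)` as `x → 0⁺`, whence `f'' s → -2 c ^ 2 / (2 - a) = -α c ^ 2 / (α - 1)`.
-/

/-- The lower incomplete gamma function γ(s, x) = ∫_0^x t^(s-1) e^(-t) dt. -/
noncomputable def lowerGamma (s x : ℝ) : ℝ := ∫ t in (0:ℝ)..x, t ^ (s - 1) * Real.exp (-t)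

/-- f(s) = (c s)^(2/α) · γ(1 − 2/α, c s). -/
noncomputable def f (c α s : ℝ) : ℝ := (c * s) ^ (2/α) * lowerGamma (1 - 2/α) (c * s)

open Real Filter Set Topology MeasureTheory intervalIntegral

section LowerGamma

variable {s : ℝ}

lemma intervalIntegrable_lowerGamma_integrand (hs : 0 < s) (a b : ℝ) :
    IntervalIntegrable (fun t => t ^ (s - 1) * exp (-t)) volume a b :=
  (intervalIntegrable_rpow' (by linarith)).mul_continuousOn (by fun_prop)

lemma continuous_lowerGamma (hs : 0 < s) : Continuous (lowerGamma s) :=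
  continuous_primitive (intervalIntegrable_lowerGamma_integrand hs) 0

lemma lowerGamma_zero_right (s : ℝ) : lowerGamma s 0 = 0 :=
  integral_same

lemma hasDerivAt_lowerGamma (hs : 0 < s) {x : ℝ} (hx : 0 < x) :
    HasDerivAt (lowerGamma s) (x ^ (s - 1) * exp (-x)) x := by
  have hmeas : Measurable fun t : ℝ => t ^ (s - 1) * exp (-t) := by fun_prop
  exact integral_hasDerivAt_right (intervalIntegrable_lowerGamma_integrand hs 0 x)
    hmeas.stronglyMeasurable.stronglyMeasurableAtFilter
    ((continuousAt_rpow_const x _ (Or.inl hx.ne')).mul (by fun_prop))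

end LowerGamma

section LowerGammaPow

variable {a x : ℝ}

noncomputable def lowerGammaPow (a x : ℝ) : ℝ := x ^ a * lowerGamma (1 - a) x

noncomputable def lowerGammaPowDeriv (a x : ℝ) : ℝ :=
  a * x ^ (a - 1) * lowerGamma (1 - a) x + exp (-x)

noncomputable def lowerGammaPowDeriv2Numer (a x : ℝ) : ℝ :=
  a * (a - 1) * lowerGamma (1 - a) x + (a * x ^ (1 - a) - x ^ (2 - a)) * exp (-x)

lemma hasDerivAt_lowerGammaPow (ha : a < 1) (hx : 0 < x) :
    HasDerivAt (lowerGammaPow a) (lowerGammaPowDeriv a x) x := by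
  refine ((hasDerivAt_rpow_const (p := a) (Or.inl hx.ne')).mul
    (hasDerivAt_lowerGamma (sub_pos.2 ha) hx)).congr_deriv ?_
  simp only [lowerGammaPowDeriv, rpow_sub hx, rpow_neg hx.le, rpow_one, sub_sub_cancel_left]
  field_simp

lemma hasDerivAt_lowerGammaPowDeriv (ha : a < 1) (hx : 0 < x) :
    HasDerivAt (lowerGammaPowDeriv a) (lowerGammaPowDeriv2Numer a x / x ^ (2 - a)) x := by
  refine ((((hasDerivAt_rpow_const (p := a - 1) (Or.inl hx.ne')).const_mul a).mul
    (hasDerivAt_lowerGamma (sub_pos.2 ha) hx)).add (hasDerivAt_neg x).exp).congr_deriv ?_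
  simp only [lowerGammaPowDeriv2Numer, rpow_sub hx, rpow_neg hx.le, rpow_one, rpow_two,
    sub_sub_cancel_left]
  field_simp
  ring

lemma continuous_lowerGammaPowDeriv2Numer (ha : a < 1) :
    Continuous (lowerGammaPowDeriv2Numer a) := by
  have h1 := continuous_rpow_const (q := 1 - a) (by linarith)
  have h2 := continuous_rpow_const (q := 2 - a) (by linarith)
  have h3 := continuous_lowerGamma (sub_pos.2 ha)
  unfold lowerGammaPowDeriv2Numer
  fun_prop

lemma lowerGammaPowDeriv2Numer_zero (ha : a < 1) : lowerGammaPowDeriv2Numer a 0 = 0 := by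
  simp [lowerGammaPowDeriv2Numer, lowerGamma_zero_right, zero_rpow (by linarith : 1 - a ≠ 0),
    zero_rpow (by linarith : 2 - a ≠ 0)]

lemma hasDerivAt_lowerGammaPowDeriv2Numer (ha : a < 1) (hx : 0 < x) :
    HasDerivAt (lowerGammaPowDeriv2Numer a) ((x - 2) * x ^ (1 - a) * exp (-x)) x := by
  refine (((hasDerivAt_lowerGamma (sub_pos.2 ha) hx).const_mul (a * (a - 1))).add
    ((((hasDerivAt_rpow_const (p := 1 - a) (Or.inl hx.ne')).const_mul a).sub
    (hasDerivAt_rpow_const (p := 2 - a) (Or.inl hx.ne'))).mul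
    (hasDerivAt_neg x).exp)).congr_deriv ?_
  simp only [Pi.sub_apply, rpow_sub hx, rpow_neg hx.le, rpow_one, rpow_two, sub_sub_cancel_left]
  field_simp
  ring

lemma tendsto_lowerGammaPowDeriv2Numer_div (ha : a < 1) :
    Tendsto (fun x => lowerGammaPowDeriv2Numer a x / x ^ (2 - a)) (𝓝[>] 0)
      (𝓝 (-2 / (2 - a))) := by
  have hpos : 0 < 2 - a := by linarith
  refine HasDerivAt.lhopital_zero_right_on_Ico zero_lt_one
    (fun x hx => hasDerivAt_lowerGammaPowDeriv2Numer ha hx.1)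
    (fun x hx => hasDerivAt_rpow_const (p := 2 - a) (Or.inl hx.1.ne'))
    (continuous_lowerGammaPowDeriv2Numer ha).continuousOn
    (continuous_rpow_const hpos.le).continuousOn
    (fun x hx => mul_ne_zero hpos.ne' (rpow_pos_of_pos hx.1 _).ne')
    (lowerGammaPowDeriv2Numer_zero ha) (zero_rpow hpos.ne') ?_
  have hlim : Tendsto (fun x : ℝ => (x - 2) * exp (-x) / (2 - a)) (𝓝[>] 0)
      (𝓝 (-2 / (2 - a))) := by
    have : Continuous fun x : ℝ => (x - 2) * exp (-x) / (2 - a) := by fun_prop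
    simpa using (this.tendsto 0).mono_left nhdsWithin_le_nhds
  refine hlim.congr' ?_
  filter_upwards [self_mem_nhdsWithin] with x hx
  have := (rpow_pos_of_pos hx (2 - a - 1)).ne'
  field_simp
  ring_nf

lemma deriv_lowerGammaPow_eventuallyEq (ha : a < 1) (hx : 0 < x) :
    deriv (lowerGammaPow a) =ᶠ[𝓝 x] lowerGammaPowDeriv a := by
  filter_upwards [Ioi_mem_nhds hx] with y hy using (hasDerivAt_lowerGammaPow ha hy).deriv

lemma hasDerivAt_deriv_lowerGammaPow (ha : a < 1) (hx : 0 < x) :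
    HasDerivAt (deriv (lowerGammaPow a)) (lowerGammaPowDeriv2Numer a x / x ^ (2 - a)) x :=
  (hasDerivAt_lowerGammaPowDeriv ha hx).congr_of_eventuallyEq
    (deriv_lowerGammaPow_eventuallyEq ha hx)

lemma tendsto_deriv_deriv_lowerGammaPow (ha : a < 1) :
    Tendsto (deriv (deriv (lowerGammaPow a))) (𝓝[>] 0) (𝓝 (-2 / (2 - a))) := by
  refine (tendsto_lowerGammaPowDeriv2Numer_div ha).congr' ?_
  filter_upwards [self_mem_nhdsWithin] with x hx
  exact (hasDerivAt_deriv_lowerGammaPow ha hx).deriv.symm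

end LowerGammaPow

section Rescaling

variable {𝕜 E : Type*} [NontriviallyNormedField 𝕜] [NormedAddCommGroup E] [NormedSpace 𝕜 E]

lemma deriv_comp_mul_left' (c : 𝕜) (g : 𝕜 → E) :
    deriv (fun y => g (c * y)) = fun x => c • deriv g (c * x) :=
  funext (deriv_comp_mul_left c g)

lemma deriv_deriv_comp_mul_left (c : 𝕜) (g : 𝕜 → E) :
    deriv (deriv fun y => g (c * y)) = fun x => c ^ 2 • deriv (deriv g) (c * x) := by
  funext x
  rw [deriv_comp_mul_left', deriv_fun_const_smul_field, deriv_comp_mul_left, smul_smul, sq]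

end Rescaling

lemma tendsto_const_mul_nhdsGT_zero {c : ℝ} (hc : 0 < c) :
    Tendsto (c * ·) (𝓝[>] 0) (𝓝[>] 0) :=
  tendsto_iff_comap.2 (comap_mulLeft_nhdsGT_zero hc).ge

theorem stmt_4 (α c : ℝ) (hα : 2 < α) (hc : 0 < c) :
    (∀ s ∈ Set.Ioi (0:ℝ), DifferentiableAt ℝ (f c α) s) ∧
    (∀ s ∈ Set.Ioi (0:ℝ), DifferentiableAt ℝ (deriv (f c α)) s) ∧
    Filter.Tendsto (deriv (deriv (f c α))) (nhdsWithin 0 (Set.Ioi 0))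
      (nhds (-(α * c ^ 2) / (α - 1))) := by
  have ha : 2 / α < 1 := (div_lt_one (by linarith)).2 hα
  have hf : f c α = fun s => lowerGammaPow (2 / α) (c * s) := rfl
  have hmul : ∀ s, DifferentiableAt ℝ (c * ·) s := fun s => differentiableAt_id.const_mul c
  refine ⟨fun s hs => ?_, fun s hs => ?_, ?_⟩
  · exact (hasDerivAt_lowerGammaPow ha (mul_pos hc hs)).differentiableAt.comp s (hmul s)
  · rw [hf, deriv_comp_mul_left']
    exact ((hasDerivAt_deriv_lowerGammaPow ha (mul_pos hc hs)).differentiableAt.comp s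
      (hmul s)).const_smul c
  · rw [hf, deriv_deriv_comp_mul_left]
    convert ((tendsto_deriv_deriv_lowerGammaPow ha).comp
      (tendsto_const_mul_nhdsGT_zero hc)).const_smul (c ^ 2) using 2
    · rfl
    · rw [smul_eq_mul]
      field_simp
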